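/- The presented group ⟨a, b | a*b*a = b*a*b, a^4 = 1, (a*b)^6 = 1⟩ is isomorphic to SL(2, ℤ/4ℤ), the group of 2×2 matrices with determinant 1 over the ring of integers modulo 4. -/
import Mathlib

/-- The three relators of the presentation
`⟨a, b | a*b*a = b*a*b, a^4 = 1, (a*b)^6 = 1⟩`, as elements of the free group
on two generators `a = FreeGroup.of 0`, `b = FreeGroup.of 1`. -/
def sl24Rels : Set (FreeGroup (Fin 2)) :=
  { (FreeGroup.of 0 * FreeGroup.of 1 * FreeGroup.of 0) *
      (FreeGroup.of 1 * FreeGroup.of 0 * FreeGroup.of 1)⁻¹,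
    (FreeGroup.of 0) ^ 4,
    (FreeGroup.of 0 * FreeGroup.of 1) ^ 6 }

namespace SL24

abbrev G := Matrix.SpecialLinearGroup (Fin 2) (ZMod 4)

instance : DecidableEq G := fun a b => decidable_of_iff (a.1 = b.1) Subtype.ext_iff.symm

def A : G := ⟨!![1,0;1,1], by decide⟩
def B : G := ⟨!![3,3;0,3], by decide⟩

def fgen : Fin 2 → G := ![A, B]

theorem hrels : ∀ r ∈ sl24Rels, FreeGroup.lift fgen r = 1 := by
  intro r hr
  rcases hr with h | h | h <;> subst h <;>
    simp only [map_mul, map_inv, map_pow, FreeGroup.lift_apply_of] <;> decide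

abbrev P := PresentedGroup sl24Rels

def phi : P →* G := PresentedGroup.toGroup hrels

def a : P := PresentedGroup.of 0
def b : P := PresentedGroup.of 1

theorem rel1 : a * b * a = b * a * b := by
  have h : PresentedGroup.mk sl24Rels ((FreeGroup.of 0 * FreeGroup.of 1 * FreeGroup.of 0) *
      (FreeGroup.of 1 * FreeGroup.of 0 * FreeGroup.of 1)⁻¹) = 1 := by
    apply (QuotientGroup.eq_one_iff _).2
    exact Subgroup.subset_normalClosure (by left; rfl)
  rw [map_mul, map_inv, mul_inv_eq_one] at h
  simpa [a, b, PresentedGroup.of, map_mul] using h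

theorem rel2 : a ^ 4 = 1 := by
  have h : PresentedGroup.mk sl24Rels ((FreeGroup.of 0) ^ 4) = 1 := by
    apply (QuotientGroup.eq_one_iff _).2
    exact Subgroup.subset_normalClosure (by right; left; rfl)
  simpa [a, PresentedGroup.of] using h

theorem rel3 : (a * b) ^ 6 = 1 := by
  have h : PresentedGroup.mk sl24Rels ((FreeGroup.of 0 * FreeGroup.of 1) ^ 6) = 1 := by
    apply (QuotientGroup.eq_one_iff _).2
    exact Subgroup.subset_normalClosure (by right; right; rfl)
  simpa [a, b, PresentedGroup.of] using h

def l0 : Fin 2 × Bool := (0, true)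
def l0i : Fin 2 × Bool := (0, false)
def l1 : Fin 2 × Bool := (1, true)
def l1i : Fin 2 × Bool := (1, false)

def lP : Fin 2 × Bool → P := fun p => cond p.2 (![a, b] p.1) (![a, b] p.1)⁻¹
def lG : Fin 2 × Bool → G := fun p => cond p.2 (![A, B] p.1) (![A, B] p.1)⁻¹

def evP (w : List (Fin 2 × Bool)) : P := (w.map lP).prod
def evG (w : List (Fin 2 × Bool)) : G := (w.map lG).prod

theorem evP_append (u v : List (Fin 2 × Bool)) : evP (u ++ v) = evP u * evP v := by
  simp [evP]

theorem stp (u v m m' : List (Fin 2 × Bool)) (h : evP m = evP m') :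
    evP (u ++ m ++ v) = evP (u ++ m' ++ v) := by
  rw [evP_append, evP_append, evP_append, evP_append, h]

theorem evP_cons (x w) : evP (x :: w) = lP x * evP w := by simp [evP]
theorem evP_cons_a (w) : evP (l0 :: w) = a * evP w := by simp [evP, lP, l0]
theorem evP_cons_b (w) : evP (l1 :: w) = b * evP w := by simp [evP, lP, l1]

theorem R0 : evP [l0, l1, l0] = evP [l1, l0, l1] := by
  simpa [evP, lP, l0, l1, mul_assoc] using rel1
theorem R1 : evP [l0, l0, l0, l0] = evP [] := by
  have h := rel2
  rw [show (4:ℕ) = 2+1+1 from rfl, pow_succ, pow_succ, pow_two] at h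
  simpa [evP, lP, l0, mul_assoc] using h
theorem R2 : evP [l0,l1,l0,l1,l0,l1,l0,l1,l0,l1,l0,l1] = evP [] := by
  have h := rel3
  rw [show (6:ℕ) = 2+1+1+1+1 from rfl, pow_succ, pow_succ, pow_succ, pow_succ, pow_two] at h
  simpa [evP, lP, l0, l1, mul_assoc] using h
theorem R3 : evP [l0, l0i] = evP [] := by simp [evP, lP, l0, l0i]
theorem R4 : evP [l0i, l0] = evP [] := by simp [evP, lP, l0, l0i]
theorem R5 : evP [l1, l1i] = evP [] := by simp [evP, lP, l1, l1i]
theorem R6 : evP [l1i, l1] = evP [] := by simp [evP, lP, l1, l1i]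

theorem R7 : evP [l1, l1, l1, l1] = evP [] :=
  (((((((((stp [] [l1, l1, l1, l1] [] [l0, l0, l0, l0] R1.symm).trans (stp [l0, l0, l0] [l0, l1, l1, l1, l1] [] [l1i, l1] R6.symm)).trans (stp [l0, l0, l0, l1i] [l1, l1, l1] [l1, l0, l1] [l0, l1, l0] R0.symm)).trans (stp [l0, l0, l0, l1i, l0] [l1, l1] [l1, l0, l1] [l0, l1, l0] R0.symm)).trans (stp [l0, l0, l0, l1i, l0, l0] [l1] [l1, l0, l1] [l0, l1, l0] R0.symm)).trans (stp [l0, l0, l0, l1i, l0, l0, l0] [] [l1, l0, l1] [l0, l1, l0] R0.symm)).trans (stp [l0, l0, l0, l1i] [l1, l0] [l0, l0, l0, l0] [] R1)).trans (stp [l0, l0, l0] [l0] [l1i, l1] [] R6)).trans (stp [] [] [l0, l0, l0, l0] [] R1))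

theorem R8 : evP [l0, l0, l1, l1] = evP [l1, l1, l0, l0] :=
  ((((((((stp [l0, l0] [l1, l1] [] [l0, l1, l0, l1, l0, l1, l0, l1, l0, l1, l0, l1] R2.symm).trans (stp [l0, l0, l0, l1, l0, l1, l0, l1, l0, l1] [l1, l1, l1] [l0, l1, l0] [l1, l0, l1] R0)).trans (stp [l0, l0, l0, l1, l0, l1, l0] [l1, l0, l1, l1, l1, l1] [l1, l0, l1] [l0, l1, l0] R0.symm)).trans (stp [l0, l0, l0, l1, l0, l1, l0, l0, l1, l0, l1, l0] [] [l1, l1, l1, l1] [] R7)).trans (stp [l0, l0, l0, l1, l0, l1, l0, l0] [l0] [l1, l0, l1] [l0, l1, l0] R0.symm)).trans (stp [l0, l0, l0] [l0, l0, l0, l1, l0, l0] [l1, l0, l1] [l0, l1, l0] R0.symm)).trans (stp [l0, l0, l0, l0, l1] [l1, l0, l0] [l0, l0, l0, l0] [] R1)).trans (stp [] [l1, l1, l0, l0] [l0, l0, l0, l0] [] R1))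

def M0 : G := ⟨!![1,0;0,1], by decide⟩

def M1 : G := ⟨!![1,0;1,1], by decide⟩

def M2 : G := ⟨!![3,3;0,3], by decide⟩

def M3 : G := ⟨!![1,0;2,1], by decide⟩

def M4 : G := ⟨!![2,3;3,3], by decide⟩

def M5 : G := ⟨!![3,3;3,2], by decide⟩

def M6 : G := ⟨!![1,2;0,1], by decide⟩

def M7 : G := ⟨!![1,0;3,1], by decide⟩

def M8 : G := ⟨!![1,3;2,3], by decide⟩

def M9 : G := ⟨!![2,3;1,2], by decide⟩

def M10 : G := ⟨!![3,2;1,1], by decide⟩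

def M11 : G := ⟨!![3,3;2,1], by decide⟩

def M12 : G := ⟨!![1,2;1,3], by decide⟩

def M13 : G := ⟨!![3,1;0,3], by decide⟩

def M14 : G := ⟨!![0,3;1,3], by decide⟩

def M15 : G := ⟨!![1,3;3,2], by decide⟩

def M16 : G := ⟨!![1,2;2,1], by decide⟩

def M17 : G := ⟨!![2,3;3,1], by decide⟩

def M18 : G := ⟨!![3,2;0,3], by decide⟩

def M19 : G := ⟨!![0,1;3,3], by decide⟩

def M20 : G := ⟨!![3,3;1,0], by decide⟩

def M21 : G := ⟨!![3,0;2,3], by decide⟩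

def M22 : G := ⟨!![3,1;3,0], by decide⟩

def M23 : G := ⟨!![0,3;1,2], by decide⟩

def M24 : G := ⟨!![3,2;3,1], by decide⟩

def M25 : G := ⟨!![1,3;0,1], by decide⟩

def M26 : G := ⟨!![1,2;3,3], by decide⟩

def M27 : G := ⟨!![1,1;2,3], by decide⟩

def M28 : G := ⟨!![2,3;1,0], by decide⟩

def M29 : G := ⟨!![3,0;1,3], by decide⟩

def M30 : G := ⟨!![0,1;3,0], by decide⟩

def M31 : G := ⟨!![3,1;2,1], by decide⟩

def M32 : G := ⟨!![0,3;1,1], by decide⟩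

def M33 : G := ⟨!![3,2;2,3], by decide⟩

def M34 : G := ⟨!![2,1;1,3], by decide⟩

def M35 : G := ⟨!![1,3;1,0], by decide⟩

def M36 : G := ⟨!![3,0;0,3], by decide⟩

def M37 : G := ⟨!![1,1;3,0], by decide⟩

def M38 : G := ⟨!![0,1;3,1], by decide⟩

def M39 : G := ⟨!![3,1;1,2], by decide⟩

def M40 : G := ⟨!![0,3;1,0], by decide⟩

def M41 : G := ⟨!![3,0;3,3], by decide⟩

def M42 : G := ⟨!![2,1;3,0], by decide⟩

def M43 : G := ⟨!![1,1;0,1], by decide⟩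

def M44 : G := ⟨!![0,1;3,2], by decide⟩

def M45 : G := ⟨!![2,1;1,1], by decide⟩

def M46 : G := ⟨!![1,1;1,2], by decide⟩

def M47 : G := ⟨!![2,1;3,2], by decide⟩

def tbl : G → List (Fin 2 × Bool) := fun g =>
  if g = M0 then [] else
  if g = M1 then [l0] else
  if g = M2 then [l1] else
  if g = M3 then [l0, l0] else
  if g = M4 then [l1, l0] else
  if g = M5 then [l0, l1] else
  if g = M6 then [l1, l1] else
  if g = M7 then [l0, l0, l0] else
  if g = M8 then [l1, l0, l0] else
  if g = M9 then [l0, l1, l0] else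
  if g = M10 then [l1, l1, l0] else
  if g = M11 then [l0, l0, l1] else
  if g = M12 then [l0, l1, l1] else
  if g = M13 then [l1, l1, l1] else
  if g = M14 then [l1, l0, l0, l0] else
  if g = M15 then [l0, l1, l0, l0] else
  if g = M16 then [l1, l1, l0, l0] else
  if g = M17 then [l0, l0, l1, l0] else
  if g = M18 then [l0, l1, l1, l0] else
  if g = M19 then [l1, l1, l1, l0] else
  if g = M20 then [l0, l0, l0, l1] else
  if g = M21 then [l1, l0, l0, l1] else
  if g = M22 then [l0, l1, l1, l1] else
  if g = M23 then [l0, l1, l0, l0, l0] else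
  if g = M24 then [l1, l1, l0, l0, l0] else
  if g = M25 then [l0, l0, l1, l0, l0] else
  if g = M26 then [l0, l1, l1, l0, l0] else
  if g = M27 then [l1, l1, l1, l0, l0] else
  if g = M28 then [l0, l0, l0, l1, l0] else
  if g = M29 then [l1, l0, l0, l1, l0] else
  if g = M30 then [l0, l1, l1, l1, l0] else
  if g = M31 then [l1, l1, l0, l0, l1] else
  if g = M32 then [l0, l0, l1, l0, l0, l0] else
  if g = M33 then [l0, l1, l1, l0, l0, l0] else
  if g = M34 then [l1, l1, l1, l0, l0, l0] else
  if g = M35 then [l0, l0, l0, l1, l0, l0] else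
  if g = M36 then [l1, l0, l0, l1, l0, l0] else
  if g = M37 then [l0, l1, l1, l1, l0, l0] else
  if g = M38 then [l1, l1, l0, l0, l1, l0] else
  if g = M39 then [l0, l1, l1, l0, l0, l1] else
  if g = M40 then [l0, l0, l0, l1, l0, l0, l0] else
  if g = M41 then [l1, l0, l0, l1, l0, l0, l0] else
  if g = M42 then [l0, l1, l1, l1, l0, l0, l0] else
  if g = M43 then [l1, l1, l0, l0, l1, l0, l0] else
  if g = M44 then [l0, l1, l1, l0, l0, l1, l0] else
  if g = M45 then [l1, l1, l0, l0, l1, l0, l0, l0] else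
  if g = M46 then [l0, l1, l1, l0, l0, l1, l0, l0] else
  [l0, l1, l1, l0, l0, l1, l0, l0, l0]

theorem cases48 : ∀ g : G, g = M0 ∨ g = M1 ∨ g = M2 ∨ g = M3 ∨ g = M4 ∨ g = M5 ∨ g = M6 ∨ g = M7 ∨ g = M8 ∨ g = M9 ∨ g = M10 ∨ g = M11 ∨ g = M12 ∨ g = M13 ∨ g = M14 ∨ g = M15 ∨ g = M16 ∨ g = M17 ∨ g = M18 ∨ g = M19 ∨ g = M20 ∨ g = M21 ∨ g = M22 ∨ g = M23 ∨ g = M24 ∨ g = M25 ∨ g = M26 ∨ g = M27 ∨ g = M28 ∨ g = M29 ∨ g = M30 ∨ g = M31 ∨ g = M32 ∨ g = M33 ∨ g = M34 ∨ g = M35 ∨ g = M36 ∨ g = M37 ∨ g = M38 ∨ g = M39 ∨ g = M40 ∨ g = M41 ∨ g = M42 ∨ g = M43 ∨ g = M44 ∨ g = M45 ∨ g = M46 ∨ g = M47 := by decide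

theorem eq0 : evP [l1, l0, l1] = evP [l0, l1, l0] :=
  (stp [] [] [l1, l0, l1] [l0, l1, l0] R0.symm)

theorem eq1 : evP [l0, l0, l0, l0] = evP [] :=
  (stp [] [] [l0, l0, l0, l0] [] R1)

theorem eq2 : evP [l1, l0, l1, l0] = evP [l0, l1, l0, l0] :=
  (stp [] [l0] [l1, l0, l1] [l0, l1, l0] R0.symm)

theorem eq3 : evP [l1, l0, l1, l1] = evP [l0, l0, l1, l0] :=
  ((stp [] [l1] [l1, l0, l1] [l0, l1, l0] R0.symm).trans (stp [l0] [] [l1, l0, l1] [l0, l1, l0] R0.symm))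

theorem eq4 : evP [l1, l1, l1, l1] = evP [] :=
  (stp [] [] [l1, l1, l1, l1] [] R7)

theorem eq5 : evP [l1, l0, l1, l0, l0] = evP [l0, l1, l0, l0, l0] :=
  (stp [] [l0, l0] [l1, l0, l1] [l0, l1, l0] R0.symm)

theorem eq6 : evP [l0, l0, l1, l1, l0] = evP [l1, l1, l0, l0, l0] :=
  ((((((((((stp [l0, l0, l1, l1, l0] [] [] [l0, l0i] R3.symm).trans (stp [l0, l0, l1, l1, l0] [l0, l0i] [] [l1, l1, l1, l1] R7.symm)).trans (stp [l0, l0, l1] [l1, l1, l1, l0, l0i] [l1, l0, l1] [l0, l1, l0] R0.symm)).trans (stp [l0] [l1, l0, l1, l1, l1, l0, l0i] [l0, l1, l0] [l1, l0, l1] R0)).trans (stp [l0, l1, l0, l1, l1, l0, l1, l1, l1, l0] [l0i] [] [l1, l1, l1, l1] R7.symm)).trans (stp [l0, l1, l0, l1, l1, l0, l1, l1] [l1, l1, l1, l0i] [l1, l0, l1] [l0, l1, l0] R0.symm)).trans (stp [l0, l1, l0, l1] [l1, l0, l1, l0, l1, l1, l1, l0i] [l1, l0, l1] [l0, l1, l0]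 R0.symm)).trans (stp [] [l1, l1, l0i] [l0, l1, l0, l1, l0, l1, l0, l1, l0, l1, l0, l1] [] R2)).trans (stp [l1, l1] [l0i] [] [l0, l0, l0, l0] R1.symm)).trans (stp [l1, l1, l0, l0, l0] [] [l0, l0i] [] R3))

theorem eq7 : evP [l1, l0, l1, l1, l0] = evP [l0, l0, l1, l0, l0] :=
  ((stp [] [l1, l0] [l1, l0, l1] [l0, l1, l0] R0.symm).trans (stp [l0] [l0] [l1, l0, l1] [l0, l1, l0] R0.symm))

theorem eq8 : evP [l1, l1, l1, l1, l0] = evP [l0] :=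
  (stp [] [l0] [l1, l1, l1, l1] [] R7)

theorem eq9 : evP [l0, l0, l0, l0, l1] = evP [l1] :=
  (stp [] [l1] [l0, l0, l0, l0] [] R1)

theorem eq10 : evP [l0, l1, l0, l0, l1] = evP [l1, l0, l0, l1, l0] :=
  ((stp [] [l0, l1] [l0, l1, l0] [l1, l0, l1] R0).trans (stp [l1, l0] [] [l1, l0, l1] [l0, l1, l0] R0.symm))

theorem eq11 : evP [l0, l0, l1, l1, l1] = evP [l1, l1, l0, l0, l1] :=
  ((((((((((stp [l0, l0, l1, l1, l1] [] [] [l1, l1i] R5.symm).trans (stp [l0, l0] [l1i] [l1, l1, l1, l1] [] R7)).trans (stp [l0, l0, l1i] [] [] [l0, l1, l0, l1, l0, l1, l0, l1, l0, l1, l0, l1] R2.symm)).trans (stp [l0, l0, l1i] [l1, l0, l1, l0, l1, l0, l1, l0, l1] [l0, l1, l0] [l1, l0, l1] R0)).trans (stp [l0, l0] [l0, l1, l1, l0, l1, l0, l1, l0, l1, l0, l1] [l1i, l1] [] R6)).trans (stp [l0, l0, l0, l1, l1, l0, l1, l0] [l0, l1] [l1, l0, l1] [l0, l1, l0] R0.symm)).trans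 (stp [l0, l0, l0, l1] [l0, l0, l1, l0, l0, l1] [l1, l0, l1] [l0, l1, l0] R0.symm)).trans (stp [l0, l0, l0] [l0, l0, l0, l1, l0, l0, l1] [l1, l0, l1] [l0, l1, l0] R0.symm)).trans (stp [l0, l0, l0, l0, l1] [l1, l0, l0, l1] [l0, l0, l0, l0] [] R1)).trans (stp [] [l1, l1, l0, l0, l1] [l0, l0, l0, l0] [] R1))

theorem eq12 : evP [l1, l0, l1, l1, l1] = evP [l0, l0, l0, l1, l0] :=
  (((stp [] [l1, l1] [l1, l0, l1] [l0, l1, l0] R0.symm).trans (stp [l0] [l1] [l1, l0, l1] [l0, l1, l0] R0.symm)).trans (stp [l0, l0] [] [l1, l0, l1] [l0, l1, l0] R0.symm))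

theorem eq13 : evP [l1, l0, l1, l0, l0, l0] = evP [l0, l1] :=
  ((stp [] [l0, l0, l0] [l1, l0, l1] [l0, l1, l0] R0.symm).trans (stp [l0, l1] [] [l0, l0, l0, l0] [] R1))

theorem eq14 : evP [l0, l0, l1, l1, l0, l0] = evP [l1, l1] :=
  (((((((stp [l0, l0, l1] [l1, l0, l0] [] [l0, l0, l0, l0] R1.symm).trans (stp [l0] [l0, l0, l0, l1, l0, l0] [l0, l1, l0] [l1, l0, l1] R0)).trans (stp [l0, l1, l0, l1, l0, l0] [l0] [l0, l1, l0] [l1, l0, l1] R0)).trans (stp [l0, l1, l0, l1, l0] [l1, l0] [l0, l1, l0] [l1, l0, l1] R0)).trans (stp [l0, l1, l0, l1, l0, l1, l0, l1, l1, l0] [] [] [l1, l1, l1, l1] R7.symm)).trans (stp [l0, l1, l0, l1, l0, l1, l0, l1] [l1, l1, l1] [l1, l0, l1] [l0, l1, l0] R0.symm)).trans (stp [] [l1, l1] [l0, l1, l0, l1, l0, l1, l0, l1, l0, l1, l0, l1] [] R2))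

theorem eq15 : evP [l1, l0, l1, l1, l0, l0] = evP [l0, l0, l1, l0, l0, l0] :=
  ((stp [] [l1, l0, l0] [l1, l0, l1] [l0, l1, l0] R0.symm).trans (stp [l0] [l0, l0] [l1, l0, l1] [l0, l1, l0] R0.symm))

theorem eq16 : evP [l1, l1, l1, l1, l0, l0] = evP [l0, l0] :=
  (stp [] [l0, l0] [l1, l1, l1, l1] [] R7)

theorem eq17 : evP [l0, l0, l0, l0, l1, l0] = evP [l1, l0] :=
  (stp [] [l1, l0] [l0, l0, l0, l0] [] R1)

theorem eq18 : evP [l1, l0, l0, l0, l1, l0] = evP [l0, l1, l1, l1, l0, l0] :=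
  (((((((((stp [l1, l0, l0] [] [l0, l1, l0] [l1, l0, l1] R0).trans (stp [] [l1, l0, l0, l1, l0, l1] [] [l0, l0, l0, l0] R1.symm)).trans (stp [l0, l0, l0] [l0, l1, l0, l1] [l0, l1, l0] [l1, l0, l1] R0)).trans (stp [l0] [l0, l0, l1, l0, l1, l0, l1, l0, l1] [] [l1i, l1] R6.symm)).trans (stp [l0, l1i] [l1, l0, l0, l1, l0, l1, l0, l1, l0, l1] [] [l0, l0, l0, l0] R1.symm)).trans (stp [l0, l1i, l0, l0, l0] [l0, l1, l0, l1, l0, l1, l0, l1] [l0, l1, l0] [l1, l0, l1] R0)).trans (stp [l0, l1i, l0, l0] [] [l0, l1, l0, l1, l0, l1, l0, l1, l0, l1, l0, l1] [] R2)).trans (stp [l0] [l1i, l0, l0] [] [l1, l1, l1, l1] R7.symm)).trans (stp [l0, l1, l1, l1] [l0, l0] [l1, l1i] [] R5))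

theorem eq19 : evP [l0, l1, l0, l0, l1, l0] = evP [l1, l0, l0, l1, l0, l0] :=
  ((stp [] [l0, l1, l0] [l0, l1, l0] [l1, l0, l1] R0).trans (stp [l1, l0] [l0] [l1, l0, l1] [l0, l1, l0] R0.symm))

theorem eq20 : evP [l0, l0, l1, l1, l1, l0] = evP [l1, l1, l0, l0, l1, l0] :=
  ((((((((((stp [l0, l0, l1, l1, l1] [l0] [] [l1, l1i] R5.symm).trans (stp [l0, l0] [l1i, l0] [l1, l1, l1, l1] [] R7)).trans (stp [l0, l0, l1i, l0] [] [] [l0, l1, l0, l1, l0, l1, l0, l1, l0, l1, l0, l1] R2.symm)).trans (stp [l0, l0, l1i, l0, l0, l1, l0, l1] [l1, l0, l1, l0, l1] [l0, l1, l0] [l1, l0, l1] R0)).trans (stp [l0, l0, l1i, l0, l0] [l1, l0, l1, l1, l0, l1, l0, l1] [l1, l0, l1] [l0, l1, l0] R0.symm)).trans (stp [l0, l0, l1i, l0, l0, l0] [l0, l1, l1, l0, l1, l0, l1] [l1, l0, l1] [l0, l1, l0] R0.symm)).trans (stp [l0, l0, l1i] [l1, l0, l0, l1, l1, l0, l1,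 l0, l1] [l0, l0, l0, l0] [] R1)).trans (stp [l0, l0] [l0, l0, l1, l1, l0, l1, l0, l1] [l1i, l1] [] R6)).trans (stp [] [l1, l1, l0, l1, l0, l1] [l0, l0, l0, l0] [] R1)).trans (stp [l1, l1, l0] [] [l1, l0, l1] [l0, l1, l0] R0.symm))

theorem eq21 : evP [l1, l0, l1, l1, l1, l0] = evP [l0, l0, l0, l1, l0, l0] :=
  (((stp [] [l1, l1, l0] [l1, l0, l1] [l0, l1, l0] R0.symm).trans (stp [l0] [l1, l0] [l1, l0, l1] [l0, l1, l0] R0.symm)).trans (stp [l0, l0] [l0] [l1, l0, l1] [l0, l1, l0] R0.symm))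

theorem eq22 : evP [l1, l1, l1, l0, l0, l1] = evP [l0, l1, l1, l0, l0, l0] :=
  ((((stp [l1, l1, l1, l0, l0, l1] [] [] [l0, l0, l0, l0] R1.symm).trans (stp [l1, l1, l1, l0] [l0, l0, l0] [l0, l1, l0] [l1, l0, l1] R0)).trans (stp [l1, l1, l1] [l1, l0, l0, l0] [l0, l1, l0] [l1, l0, l1] R0)).trans (stp [] [l0, l1, l1, l0, l0, l0] [l1, l1, l1, l1] [] R7))

theorem eq23 : evP [l0, l0, l1, l1, l0, l0, l0] = evP [l1, l1, l0] :=
  (((((((stp [l0, l0, l1] [l1, l0, l0, l0] [] [l0, l0, l0, l0] R1.symm).trans (stp [l0] [l0, l0, l0, l1, l0, l0, l0] [l0, l1, l0] [l1, l0, l1] R0)).trans (stp [l0, l1, l0, l1, l0, l0] [l0, l0] [l0, l1, l0] [l1, l0, l1] R0)).trans (stp [l0, l1, l0, l1, l0] [l1, l0, l0] [l0, l1, l0] [l1, l0, l1] R0)).trans (stp [l0, l1, l0, l1, l0, l1, l0, l1, l1, l0] [l0] [] [l1, l1, l1, l1] R7.symm)).trans (stp [l0, l1, l0, l1, l0, l1,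 l0, l1] [l1, l1, l1, l0] [l1, l0, l1] [l0, l1, l0] R0.symm)).trans (stp [] [l1, l1, l0] [l0, l1, l0, l1, l0, l1, l0, l1, l0, l1, l0, l1] [] R2))

theorem eq24 : evP [l1, l0, l1, l1, l0, l0, l0] = evP [l0, l0, l1] :=
  (((stp [] [l1, l0, l0, l0] [l1, l0, l1] [l0, l1, l0] R0.symm).trans (stp [l0] [l0, l0, l0] [l1, l0, l1] [l0, l1, l0] R0.symm)).trans (stp [l0, l0, l1] [] [l0, l0, l0, l0] [] R1))

theorem eq25 : evP [l1, l1, l1, l1, l0, l0, l0] = evP [l0, l0, l0] :=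
  (stp [] [l0, l0, l0] [l1, l1, l1, l1] [] R7)

theorem eq26 : evP [l0, l0, l0, l0, l1, l0, l0] = evP [l1, l0, l0] :=
  (stp [] [l1, l0, l0] [l0, l0, l0, l0] [] R1)

theorem eq27 : evP [l1, l0, l0, l0, l1, l0, l0] = evP [l0, l1, l1, l1, l0, l0, l0] :=
  (((((((((stp [l1, l0, l0] [l0] [l0, l1, l0] [l1, l0, l1] R0).trans (stp [] [l1, l0, l0, l1, l0, l1, l0] [] [l0, l0, l0, l0] R1.symm)).trans (stp [l0, l0, l0] [l0, l1, l0, l1, l0] [l0, l1, l0] [l1, l0, l1] R0)).trans (stp [l0] [l0, l0, l1, l0, l1, l0, l1, l0, l1, l0] [] [l1i, l1] R6.symm)).trans (stp [l0, l1i] [l1, l0, l0, l1, l0, l1, l0, l1, l0, l1, l0] [] [l0, l0, l0, l0] R1.symm)).trans (stp [l0, l1i, l0, l0, l0] [l0, l1, l0, l1, l0, l1, l0, l1, l0] [l0, l1, l0] [l1, l0, l1] R0)).trans (stp [l0, l1i, l0, l0] [l0] [l0, l1, l0, l1, l0, l1, l0, l1, l0, l1, l0, l1] [] R2)).trans (stp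 [l0] [l1i, l0, l0, l0] [] [l1, l1, l1, l1] R7.symm)).trans (stp [l0, l1, l1, l1] [l0, l0, l0] [l1, l1i] [] R5))

theorem eq28 : evP [l0, l1, l0, l0, l1, l0, l0] = evP [l1, l0, l0, l1, l0, l0, l0] :=
  ((stp [] [l0, l1, l0, l0] [l0, l1, l0] [l1, l0, l1] R0).trans (stp [l1, l0] [l0, l0] [l1, l0, l1] [l0, l1, l0] R0.symm))

theorem eq29 : evP [l1, l0, l1, l1, l1, l0, l0] = evP [l0, l0, l0, l1, l0, l0, l0] :=
  (((stp [] [l1, l1, l0, l0] [l1, l0, l1] [l0, l1, l0] R0.symm).trans (stp [l0] [l1, l0, l0] [l1, l0, l1] [l0, l1, l0] R0.symm)).trans (stp [l0, l0] [l0, l0] [l1, l0, l1] [l0, l1, l0] R0.symm))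

theorem eq30 : evP [l1, l1, l1, l0, l0, l1, l0] = evP [l0, l1, l1] :=
  (((stp [l1, l1, l1, l0] [] [l0, l1, l0] [l1, l0, l1] R0).trans (stp [l1, l1, l1] [l1] [l0, l1, l0] [l1, l0, l1] R0)).trans (stp [] [l0, l1, l1] [l1, l1, l1, l1] [] R7))

theorem eq31 : evP [l0, l0, l1, l1, l0, l0, l1] = evP [l1, l1, l1] :=
  (((((((stp [l0, l0, l1] [l1, l0, l0, l1] [] [l0, l0, l0, l0] R1.symm).trans (stp [l0] [l0, l0, l0, l1, l0, l0, l1] [l0, l1, l0] [l1, l0, l1] R0)).trans (stp [l0, l1] [l0, l0, l1, l0, l0, l1] [l0, l1, l0] [l1, l0, l1] R0)).trans (stp [l0, l1, l1, l0, l1, l0] [l0, l1] [l0, l1, l0] [l1, l0, l1] R0)).trans (stp [] [l0, l1, l1, l0, l1, l0, l1, l0, l1, l0, l1] [] [l1, l1, l1, l1] R7.symm)).trans (stp [l1, l1, l1] [l1, l0, l1, l0, l1, l0, l1, l0, l1] [l1, l0, l1] [l0, l1, l0] R0.symm)).trans (stp [l1, l1, l1] [] [l0, l1, l0, l1, l0,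 l1, l0, l1, l0, l1, l0, l1] [] R2))

theorem eq32 : evP [l1, l0, l1, l1, l0, l0, l1] = evP [l0, l1, l1, l0, l0, l1, l0] :=
  (((stp [] [l1, l0, l0, l1] [l1, l0, l1] [l0, l1, l0] R0.symm).trans (stp [l0, l1] [l0, l1] [l0, l1, l0] [l1, l0, l1] R0)).trans (stp [l0, l1, l1, l0] [] [l1, l0, l1] [l0, l1, l0] R0.symm))

theorem eq33 : evP [l0, l0, l0, l0, l1, l0, l0, l0] = evP [l1, l0, l0, l0] :=
  (stp [] [l1, l0, l0, l0] [l0, l0, l0, l0] [] R1)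

theorem eq34 : evP [l1, l0, l0, l0, l1, l0, l0, l0] = evP [l0, l1, l1, l1] :=
  ((((((((stp [l1, l0, l0] [l0, l0] [l0, l1, l0] [l1, l0, l1] R0).trans (stp [l1, l0, l0, l1] [l0] [l0, l1, l0] [l1, l0, l1] R0)).trans (stp [l1, l0] [l0, l1, l1, l0, l1, l0] [] [l1, l1, l1, l1] R7.symm)).trans (stp [l1, l0, l1, l1, l1, l1, l0, l1, l1, l0, l1, l0] [] [] [l1, l1, l1, l1] R7.symm)).trans (stp [l1, l0, l1, l1, l1] [l1, l0, l1, l0, l1, l1, l1, l1] [l1, l0, l1] [l0, l1, l0] R0.symm)).trans (stp [] [l1, l1, l0, l1, l0, l1, l0, l1, l0, l1, l1, l1, l1] [l1, l0, l1] [l0, l1, l0] R0.symm)).trans (stp [l0] [l1, l0, l1, l0, l1, l0, l1, l0, l1, l1, l1, l1] [l1, l0, l1] [l0, l1, l0] R0.symm)).trans (stp [l0] [l1, l1, l1] [l0, l1, l0, l1, l0, l1, l0, l1, l0, l1, l0, l1] [] R2))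

theorem eq35 : evP [l0, l1, l0, l0, l1, l0, l0, l0] = evP [l1, l0, l0, l1] :=
  (((stp [] [l0, l1, l0, l0, l0] [l0, l1, l0] [l1, l0, l1] R0).trans (stp [l1, l0] [l0, l0, l0] [l1, l0, l1] [l0, l1, l0] R0.symm)).trans (stp [l1, l0, l0, l1] [] [l0, l0, l0, l0] [] R1))

theorem eq36 : evP [l1, l0, l1, l1, l1, l0, l0, l0] = evP [l0, l0, l0, l1] :=
  ((((stp [] [l1, l1, l0, l0, l0] [l1, l0, l1] [l0, l1, l0] R0.symm).trans (stp [l0] [l1, l0, l0, l0] [l1, l0, l1] [l0, l1, l0] R0.symm)).trans (stp [l0, l0] [l0, l0, l0] [l1, l0, l1] [l0, l1, l0] R0.symm)).trans (stp [l0, l0, l0, l1] [] [l0, l0, l0, l0] [] R1))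

theorem eq37 : evP [l1, l1, l1, l0, l0, l1, l0, l0] = evP [l0, l1, l1, l0] :=
  (((stp [l1, l1, l1, l0] [l0] [l0, l1, l0] [l1, l0, l1] R0).trans (stp [l1, l1, l1] [l1, l0] [l0, l1, l0] [l1, l0, l1] R0)).trans (stp [] [l0, l1, l1, l0] [l1, l1, l1, l1] [] R7))

theorem eq38 : evP [l0, l0, l1, l1, l0, l0, l1, l0] = evP [l1, l1, l1, l0] :=
  (((((((stp [l0, l0, l1, l1, l0] [] [l0, l1, l0] [l1, l0, l1] R0).trans (stp [] [l0, l0, l1, l1, l0, l1, l0, l1] [] [l1, l1, l1, l1] R7.symm)).trans (stp [l1, l1, l1] [l1, l0, l0, l1, l1, l0, l1, l0, l1] [] [l0, l0, l0, l0] R1.symm)).trans (stp [l1, l1, l1, l0, l0, l0] [l0, l1, l1, l0, l1, l0, l1] [l0, l1, l0] [l1, l0, l1] R0)).trans (stp [l1, l1, l1, l0, l0] [l1, l0, l1, l1, l0, l1, l0, l1] [l0, l1, l0] [l1, l0, l1] R0)).trans (stp [l1, l1, l1, l0, l0, l1, l0, l1] [l1, l0, l1, l0, l1] [l1, l0, l1]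 [l0, l1, l0] R0.symm)).trans (stp [l1, l1, l1, l0] [] [l0, l1, l0, l1, l0, l1, l0, l1, l0, l1, l0, l1] [] R2))

theorem eq39 : evP [l1, l0, l1, l1, l0, l0, l1, l0] = evP [l0, l1, l1, l0, l0, l1, l0, l0] :=
  (((stp [] [l1, l0, l0, l1, l0] [l1, l0, l1] [l0, l1, l0] R0.symm).trans (stp [l0, l1] [l0, l1, l0] [l0, l1, l0] [l1, l0, l1] R0)).trans (stp [l0, l1, l1, l0] [l0] [l1, l0, l1] [l0, l1, l0] R0.symm))

theorem eq40 : evP [l1, l1, l1, l0, l0, l1, l0, l0, l0] = evP [l0, l1, l1, l0, l0] :=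
  (((stp [l1, l1, l1, l0] [l0, l0] [l0, l1, l0] [l1, l0, l1] R0).trans (stp [l1, l1, l1] [l1, l0, l0] [l0, l1, l0] [l1, l0, l1] R0)).trans (stp [] [l0, l1, l1, l0, l0] [l1, l1, l1, l1] [] R7))

theorem eq41 : evP [l0, l0, l1, l1, l0, l0, l1, l0, l0] = evP [l1, l1, l1, l0, l0] :=
  (((((((stp [l0, l0, l1, l1, l0] [l0] [l0, l1, l0] [l1, l0, l1] R0).trans (stp [l0, l0, l1, l1, l0, l1] [] [l0, l1, l0] [l1, l0, l1] R0)).trans (stp [l0, l0, l1] [l1, l0, l1] [l1, l0, l1] [l0, l1, l0] R0.symm)).trans (stp [] [l0, l0, l1, l0, l1, l0, l1, l0, l1] [] [l1, l1, l1, l1] R7.symm)).trans (stp [l1, l1, l1] [l1, l0, l0, l1, l0, l1, l0, l1, l0, l1] [] [l0, l0, l0, l0] R1.symm)).trans (stp [l1, l1, l1, l0, l0, l0] [l0, l1, l0, l1, l0, l1, l0, l1] [l0, l1, l0] [l1, l0, l1] R0)).trans (stp [l1, l1, l1, l0, l0] [] [l0, l1, l0, l1, l0, l1, l0, l1, l0,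 l1, l0, l1] [] R2))

theorem eq42 : evP [l1, l0, l1, l1, l0, l0, l1, l0, l0] = evP [l0, l1, l1, l0, l0, l1, l0, l0, l0] :=
  (((stp [] [l1, l0, l0, l1, l0, l0] [l1, l0, l1] [l0, l1, l0] R0.symm).trans (stp [l0, l1] [l0, l1, l0, l0] [l0, l1, l0] [l1, l0, l1] R0)).trans (stp [l0, l1, l1, l0] [l0, l0] [l1, l0, l1] [l0, l1, l0] R0.symm))

theorem eq43 : evP [l0, l0, l1, l1, l0, l0, l1, l0, l0, l0] = evP [l1, l1, l1, l0, l0, l0] :=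
  (((((((stp [l0, l0, l1, l1, l0] [l0, l0] [l0, l1, l0] [l1, l0, l1] R0).trans (stp [l0, l0, l1, l1, l0, l1] [l0] [l0, l1, l0] [l1, l0, l1] R0)).trans (stp [l0, l0, l1] [l1, l0, l1, l0] [l1, l0, l1] [l0, l1, l0] R0.symm)).trans (stp [] [l0, l0, l1, l0, l1, l0, l1, l0, l1, l0] [] [l1, l1, l1, l1] R7.symm)).trans (stp [l1, l1, l1] [l1, l0, l0, l1, l0, l1, l0, l1, l0, l1, l0] [] [l0, l0, l0, l0] R1.symm)).trans (stp [l1, l1, l1, l0, l0, l0] [l0, l1, l0, l1, l0, l1, l0, l1, l0] [l0, l1, l0] [l1, l0, l1] R0)).trans (stp [l1, l1, l1, l0, l0] [l0] [l0, l1, l0, l1, l0, l1, l0, l1, l0, l1, l0, l1] [] R2))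

theorem eq44 : evP [l1, l0, l1, l1, l0, l0, l1, l0, l0, l0] = evP [l0, l1, l1, l0, l0, l1] :=
  ((((stp [] [l1, l0, l0, l1, l0, l0, l0] [l1, l0, l1] [l0, l1, l0] R0.symm).trans (stp [l0, l1] [l0, l1, l0, l0, l0] [l0, l1, l0] [l1, l0, l1] R0)).trans (stp [l0, l1, l1, l0] [l0, l0, l0] [l1, l0, l1] [l0, l1, l0] R0.symm)).trans (stp [l0, l1, l1, l0, l0, l1] [] [l0, l0, l0, l0] [] R1))

theorem eq45 : evP [l0, l0, l1, l1] = evP [l1, l1, l0, l0] :=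
  (stp [] [] [l0, l0, l1, l1] [l1, l1, l0, l0] R8)

theorem eq46 : evP [l1, l0, l0, l0, l1] = evP [l0, l1, l1, l1, l0] :=
  ((((((stp [] [l1, l0, l0, l0, l1] [] [l0, l0, l0, l0] R1.symm).trans (stp [l0, l0, l0] [l0, l0, l1] [l0, l1, l0] [l1, l0, l1] R0)).trans (stp [l0, l0, l0, l1] [l0, l1] [l0, l1, l0] [l1, l0, l1] R0)).trans (stp [l0, l0, l0, l1, l1, l0] [] [l1, l0, l1] [l0, l1, l0] R0.symm)).trans (stp [l0, l0, l0] [l1, l0] [l1, l1, l0, l0] [l0, l0, l1, l1] R8.symm)).trans (stp [] [l0, l1, l1, l1, l0] [l0, l0, l0, l0] [] R1))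

theorem eq47 : evP [l0, l0, l1, l1, l1, l0, l0] = evP [l1, l1, l0, l0, l1, l0, l0] :=
  (stp [] [l1, l0, l0] [l0, l0, l1, l1] [l1, l1, l0, l0] R8)

theorem eq48 : evP [l0, l0, l1, l1, l1, l0, l0, l0] = evP [l1, l1, l0, l0, l1, l0, l0, l0] :=
  (stp [] [l1, l0, l0, l0] [l0, l0, l1, l1] [l1, l1, l0, l0] R8)

theorem keyA : ∀ g : G, a * evP (tbl g) = evP (tbl (A * g)) := by
  intro g
  rcases cases48 g with rfl|rfl|rfl|rfl|rfl|rfl|rfl|rfl|rfl|rfl|rfl|rfl|rfl|rfl|rfl|rfl|rfl|rfl|rfl|rfl|rfl|rfl|rfl|rfl|rfl|rfl|rfl|rfl|rfl|rfl|rfl|rfl|rfl|rfl|rfl|rfl|rfl|rfl|rfl|rfl|rfl|rfl|rfl|rfl|rfl|rfl|rfl|rfl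
  · rw [show (A * M0 : G) = M1 from by decide, show tbl M0 = [] from by decide, show tbl M1 = [l0] from by decide, ← evP_cons_a]
  · rw [show (A * M1 : G) = M3 from by decide, show tbl M1 = [l0] from by decide, show tbl M3 = [l0, l0] from by decide, ← evP_cons_a]
  · rw [show (A * M2 : G) = M5 from by decide, show tbl M2 = [l1] from by decide, show tbl M5 = [l0, l1] from by decide, ← evP_cons_a]
  · rw [show (A * M3 : G) = M7 from by decide, show tbl M3 = [l0, l0] from by decide, show tbl M7 = [l0, l0, l0] from by decide, ← evP_cons_a]
  · rw [show (A * M4 : G) = M9 from by decide, show tbl M4 = [l1, l0] from by decide, show tbl M9 = [l0, l1, l0] from by decide, ← evP_cons_a]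
  · rw [show (A * M5 : G) = M11 from by decide, show tbl M5 = [l0, l1] from by decide, show tbl M11 = [l0, l0, l1] from by decide, ← evP_cons_a]
  · rw [show (A * M6 : G) = M12 from by decide, show tbl M6 = [l1, l1] from by decide, show tbl M12 = [l0, l1, l1] from by decide, ← evP_cons_a]
  · rw [show (A * M7 : G) = M0 from by decide, show tbl M7 = [l0, l0, l0] from by decide, show tbl M0 = [] from by decide, ← evP_cons_a]
    exact eq1
  · rw [show (A * M8 : G) = M15 from by decide, show tbl M8 = [l1, l0, l0] from by decide, show tbl M15 = [l0, l1, l0, l0] from by decide, ← evP_cons_a]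
  · rw [show (A * M9 : G) = M17 from by decide, show tbl M9 = [l0, l1, l0] from by decide, show tbl M17 = [l0, l0, l1, l0] from by decide, ← evP_cons_a]
  · rw [show (A * M10 : G) = M18 from by decide, show tbl M10 = [l1, l1, l0] from by decide, show tbl M18 = [l0, l1, l1, l0] from by decide, ← evP_cons_a]
  · rw [show (A * M11 : G) = M20 from by decide, show tbl M11 = [l0, l0, l1] from by decide, show tbl M20 = [l0, l0, l0, l1] from by decide, ← evP_cons_a]
  · rw [show (A * M12 : G) = M16 from by decide, show tbl M12 = [l0, l1, l1] from by decide, show tbl M16 = [l1, l1, l0, l0] from by decide, ← evP_cons_a]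
    exact eq45
  · rw [show (A * M13 : G) = M22 from by decide, show tbl M13 = [l1, l1, l1] from by decide, show tbl M22 = [l0, l1, l1, l1] from by decide, ← evP_cons_a]
  · rw [show (A * M14 : G) = M23 from by decide, show tbl M14 = [l1, l0, l0, l0] from by decide, show tbl M23 = [l0, l1, l0, l0, l0] from by decide, ← evP_cons_a]
  · rw [show (A * M15 : G) = M25 from by decide, show tbl M15 = [l0, l1, l0, l0] from by decide, show tbl M25 = [l0, l0, l1, l0, l0] from by decide, ← evP_cons_a]
  · rw [show (A * M16 : G) = M26 from by decide, show tbl M16 = [l1, l1, l0, l0] from by decide, show tbl M26 = [l0, l1, l1, l0, l0] from by decide, ← evP_cons_a]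
  · rw [show (A * M17 : G) = M28 from by decide, show tbl M17 = [l0, l0, l1, l0] from by decide, show tbl M28 = [l0, l0, l0, l1, l0] from by decide, ← evP_cons_a]
  · rw [show (A * M18 : G) = M24 from by decide, show tbl M18 = [l0, l1, l1, l0] from by decide, show tbl M24 = [l1, l1, l0, l0, l0] from by decide, ← evP_cons_a]
    exact eq6
  · rw [show (A * M19 : G) = M30 from by decide, show tbl M19 = [l1, l1, l1, l0] from by decide, show tbl M30 = [l0, l1, l1, l1, l0] from by decide, ← evP_cons_a]
  · rw [show (A * M20 : G) = M2 from by decide, show tbl M20 = [l0, l0, l0, l1] from by decide, show tbl M2 = [l1] from by decide, ← evP_cons_a]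
    exact eq9
  · rw [show (A * M21 : G) = M29 from by decide, show tbl M21 = [l1, l0, l0, l1] from by decide, show tbl M29 = [l1, l0, l0, l1, l0] from by decide, ← evP_cons_a]
    exact eq10
  · rw [show (A * M22 : G) = M31 from by decide, show tbl M22 = [l0, l1, l1, l1] from by decide, show tbl M31 = [l1, l1, l0, l0, l1] from by decide, ← evP_cons_a]
    exact eq11
  · rw [show (A * M23 : G) = M32 from by decide, show tbl M23 = [l0, l1, l0, l0, l0] from by decide, show tbl M32 = [l0, l0, l1, l0, l0, l0] from by decide, ← evP_cons_a]
  · rw [show (A * M24 : G) = M33 from by decide, show tbl M24 = [l1, l1, l0, l0, l0] from by decide, show tbl M33 = [l0, l1, l1, l0, l0, l0] from by decide, ← evP_cons_a]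
  · rw [show (A * M25 : G) = M35 from by decide, show tbl M25 = [l0, l0, l1, l0, l0] from by decide, show tbl M35 = [l0, l0, l0, l1, l0, l0] from by decide, ← evP_cons_a]
  · rw [show (A * M26 : G) = M6 from by decide, show tbl M26 = [l0, l1, l1, l0, l0] from by decide, show tbl M6 = [l1, l1] from by decide, ← evP_cons_a]
    exact eq14
  · rw [show (A * M27 : G) = M37 from by decide, show tbl M27 = [l1, l1, l1, l0, l0] from by decide, show tbl M37 = [l0, l1, l1, l1, l0, l0] from by decide, ← evP_cons_a]
  · rw [show (A * M28 : G) = M4 from by decide, show tbl M28 = [l0, l0, l0, l1, l0] from by decide, show tbl M4 = [l1, l0] from by decide, ← evP_cons_a]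
    exact eq17
  · rw [show (A * M29 : G) = M36 from by decide, show tbl M29 = [l1, l0, l0, l1, l0] from by decide, show tbl M36 = [l1, l0, l0, l1, l0, l0] from by decide, ← evP_cons_a]
    exact eq19
  · rw [show (A * M30 : G) = M38 from by decide, show tbl M30 = [l0, l1, l1, l1, l0] from by decide, show tbl M38 = [l1, l1, l0, l0, l1, l0] from by decide, ← evP_cons_a]
    exact eq20
  · rw [show (A * M31 : G) = M39 from by decide, show tbl M31 = [l1, l1, l0, l0, l1] from by decide, show tbl M39 = [l0, l1, l1, l0, l0, l1] from by decide, ← evP_cons_a]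
  · rw [show (A * M32 : G) = M40 from by decide, show tbl M32 = [l0, l0, l1, l0, l0, l0] from by decide, show tbl M40 = [l0, l0, l0, l1, l0, l0, l0] from by decide, ← evP_cons_a]
  · rw [show (A * M33 : G) = M10 from by decide, show tbl M33 = [l0, l1, l1, l0, l0, l0] from by decide, show tbl M10 = [l1, l1, l0] from by decide, ← evP_cons_a]
    exact eq23
  · rw [show (A * M34 : G) = M42 from by decide, show tbl M34 = [l1, l1, l1, l0, l0, l0] from by decide, show tbl M42 = [l0, l1, l1, l1, l0, l0, l0] from by decide, ← evP_cons_a]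
  · rw [show (A * M35 : G) = M8 from by decide, show tbl M35 = [l0, l0, l0, l1, l0, l0] from by decide, show tbl M8 = [l1, l0, l0] from by decide, ← evP_cons_a]
    exact eq26
  · rw [show (A * M36 : G) = M41 from by decide, show tbl M36 = [l1, l0, l0, l1, l0, l0] from by decide, show tbl M41 = [l1, l0, l0, l1, l0, l0, l0] from by decide, ← evP_cons_a]
    exact eq28
  · rw [show (A * M37 : G) = M43 from by decide, show tbl M37 = [l0, l1, l1, l1, l0, l0] from by decide, show tbl M43 = [l1, l1, l0, l0, l1, l0, l0] from by decide, ← evP_cons_a]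
    exact eq47
  · rw [show (A * M38 : G) = M44 from by decide, show tbl M38 = [l1, l1, l0, l0, l1, l0] from by decide, show tbl M44 = [l0, l1, l1, l0, l0, l1, l0] from by decide, ← evP_cons_a]
  · rw [show (A * M39 : G) = M13 from by decide, show tbl M39 = [l0, l1, l1, l0, l0, l1] from by decide, show tbl M13 = [l1, l1, l1] from by decide, ← evP_cons_a]
    exact eq31
  · rw [show (A * M40 : G) = M14 from by decide, show tbl M40 = [l0, l0, l0, l1, l0, l0, l0] from by decide, show tbl M14 = [l1, l0, l0, l0] from by decide, ← evP_cons_a]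
    exact eq33
  · rw [show (A * M41 : G) = M21 from by decide, show tbl M41 = [l1, l0, l0, l1, l0, l0, l0] from by decide, show tbl M21 = [l1, l0, l0, l1] from by decide, ← evP_cons_a]
    exact eq35
  · rw [show (A * M42 : G) = M45 from by decide, show tbl M42 = [l0, l1, l1, l1, l0, l0, l0] from by decide, show tbl M45 = [l1, l1, l0, l0, l1, l0, l0, l0] from by decide, ← evP_cons_a]
    exact eq48
  · rw [show (A * M43 : G) = M46 from by decide, show tbl M43 = [l1, l1, l0, l0, l1, l0, l0] from by decide, show tbl M46 = [l0, l1, l1, l0, l0, l1, l0, l0] from by decide, ← evP_cons_a]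
  · rw [show (A * M44 : G) = M19 from by decide, show tbl M44 = [l0, l1, l1, l0, l0, l1, l0] from by decide, show tbl M19 = [l1, l1, l1, l0] from by decide, ← evP_cons_a]
    exact eq38
  · rw [show (A * M45 : G) = M47 from by decide, show tbl M45 = [l1, l1, l0, l0, l1, l0, l0, l0] from by decide, show tbl M47 = [l0, l1, l1, l0, l0, l1, l0, l0, l0] from by decide, ← evP_cons_a]
  · rw [show (A * M46 : G) = M27 from by decide, show tbl M46 = [l0, l1, l1, l0, l0, l1, l0, l0] from by decide, show tbl M27 = [l1, l1, l1, l0, l0] from by decide, ← evP_cons_a]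
    exact eq41
  · rw [show (A * M47 : G) = M34 from by decide, show tbl M47 = [l0, l1, l1, l0, l0, l1, l0, l0, l0] from by decide, show tbl M34 = [l1, l1, l1, l0, l0, l0] from by decide, ← evP_cons_a]
    exact eq43


theorem keyB : ∀ g : G, b * evP (tbl g) = evP (tbl (B * g)) := by
  intro g
  rcases cases48 g with rfl|rfl|rfl|rfl|rfl|rfl|rfl|rfl|rfl|rfl|rfl|rfl|rfl|rfl|rfl|rfl|rfl|rfl|rfl|rfl|rfl|rfl|rfl|rfl|rfl|rfl|rfl|rfl|rfl|rfl|rfl|rfl|rfl|rfl|rfl|rfl|rfl|rfl|rfl|rfl|rfl|rfl|rfl|rfl|rfl|rfl|rfl|rfl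
  · rw [show (B * M0 : G) = M2 from by decide, show tbl M0 = [] from by decide, show tbl M2 = [l1] from by decide, ← evP_cons_b]
  · rw [show (B * M1 : G) = M4 from by decide, show tbl M1 = [l0] from by decide, show tbl M4 = [l1, l0] from by decide, ← evP_cons_b]
  · rw [show (B * M2 : G) = M6 from by decide, show tbl M2 = [l1] from by decide, show tbl M6 = [l1, l1] from by decide, ← evP_cons_b]
  · rw [show (B * M3 : G) = M8 from by decide, show tbl M3 = [l0, l0] from by decide, show tbl M8 = [l1, l0, l0] from by decide, ← evP_cons_b]
  · rw [show (B * M4 : G) = M10 from by decide, show tbl M4 = [l1, l0] from by decide, show tbl M10 = [l1, l1, l0] from by decide, ← evP_cons_b]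
  · rw [show (B * M5 : G) = M9 from by decide, show tbl M5 = [l0, l1] from by decide, show tbl M9 = [l0, l1, l0] from by decide, ← evP_cons_b]
    exact eq0
  · rw [show (B * M6 : G) = M13 from by decide, show tbl M6 = [l1, l1] from by decide, show tbl M13 = [l1, l1, l1] from by decide, ← evP_cons_b]
  · rw [show (B * M7 : G) = M14 from by decide, show tbl M7 = [l0, l0, l0] from by decide, show tbl M14 = [l1, l0, l0, l0] from by decide, ← evP_cons_b]
  · rw [show (B * M8 : G) = M16 from by decide, show tbl M8 = [l1, l0, l0] from by decide, show tbl M16 = [l1, l1, l0, l0] from by decide, ← evP_cons_b]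
  · rw [show (B * M9 : G) = M15 from by decide, show tbl M9 = [l0, l1, l0] from by decide, show tbl M15 = [l0, l1, l0, l0] from by decide, ← evP_cons_b]
    exact eq2
  · rw [show (B * M10 : G) = M19 from by decide, show tbl M10 = [l1, l1, l0] from by decide, show tbl M19 = [l1, l1, l1, l0] from by decide, ← evP_cons_b]
  · rw [show (B * M11 : G) = M21 from by decide, show tbl M11 = [l0, l0, l1] from by decide, show tbl M21 = [l1, l0, l0, l1] from by decide, ← evP_cons_b]
  · rw [show (B * M12 : G) = M17 from by decide, show tbl M12 = [l0, l1, l1] from by decide, show tbl M17 = [l0, l0, l1, l0] from by decide, ← evP_cons_b]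
    exact eq3
  · rw [show (B * M13 : G) = M0 from by decide, show tbl M13 = [l1, l1, l1] from by decide, show tbl M0 = [] from by decide, ← evP_cons_b]
    exact eq4
  · rw [show (B * M14 : G) = M24 from by decide, show tbl M14 = [l1, l0, l0, l0] from by decide, show tbl M24 = [l1, l1, l0, l0, l0] from by decide, ← evP_cons_b]
  · rw [show (B * M15 : G) = M23 from by decide, show tbl M15 = [l0, l1, l0, l0] from by decide, show tbl M23 = [l0, l1, l0, l0, l0] from by decide, ← evP_cons_b]
    exact eq5
  · rw [show (B * M16 : G) = M27 from by decide, show tbl M16 = [l1, l1, l0, l0] from by decide, show tbl M27 = [l1, l1, l1, l0, l0] from by decide, ← evP_cons_b]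
  · rw [show (B * M17 : G) = M29 from by decide, show tbl M17 = [l0, l0, l1, l0] from by decide, show tbl M29 = [l1, l0, l0, l1, l0] from by decide, ← evP_cons_b]
  · rw [show (B * M18 : G) = M25 from by decide, show tbl M18 = [l0, l1, l1, l0] from by decide, show tbl M25 = [l0, l0, l1, l0, l0] from by decide, ← evP_cons_b]
    exact eq7
  · rw [show (B * M19 : G) = M1 from by decide, show tbl M19 = [l1, l1, l1, l0] from by decide, show tbl M1 = [l0] from by decide, ← evP_cons_b]
    exact eq8
  · rw [show (B * M20 : G) = M30 from by decide, show tbl M20 = [l0, l0, l0, l1] from by decide, show tbl M30 = [l0, l1, l1, l1, l0] from by decide, ← evP_cons_b]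
    exact eq46
  · rw [show (B * M21 : G) = M31 from by decide, show tbl M21 = [l1, l0, l0, l1] from by decide, show tbl M31 = [l1, l1, l0, l0, l1] from by decide, ← evP_cons_b]
  · rw [show (B * M22 : G) = M28 from by decide, show tbl M22 = [l0, l1, l1, l1] from by decide, show tbl M28 = [l0, l0, l0, l1, l0] from by decide, ← evP_cons_b]
    exact eq12
  · rw [show (B * M23 : G) = M5 from by decide, show tbl M23 = [l0, l1, l0, l0, l0] from by decide, show tbl M5 = [l0, l1] from by decide, ← evP_cons_b]
    exact eq13
  · rw [show (B * M24 : G) = M34 from by decide, show tbl M24 = [l1, l1, l0, l0, l0] from by decide, show tbl M34 = [l1, l1, l1, l0, l0, l0] from by decide, ← evP_cons_b]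
  · rw [show (B * M25 : G) = M36 from by decide, show tbl M25 = [l0, l0, l1, l0, l0] from by decide, show tbl M36 = [l1, l0, l0, l1, l0, l0] from by decide, ← evP_cons_b]
  · rw [show (B * M26 : G) = M32 from by decide, show tbl M26 = [l0, l1, l1, l0, l0] from by decide, show tbl M32 = [l0, l0, l1, l0, l0, l0] from by decide, ← evP_cons_b]
    exact eq15
  · rw [show (B * M27 : G) = M3 from by decide, show tbl M27 = [l1, l1, l1, l0, l0] from by decide, show tbl M3 = [l0, l0] from by decide, ← evP_cons_b]
    exact eq16
  · rw [show (B * M28 : G) = M37 from by decide, show tbl M28 = [l0, l0, l0, l1, l0] from by decide, show tbl M37 = [l0, l1, l1, l1, l0, l0] from by decide, ← evP_cons_b]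
    exact eq18
  · rw [show (B * M29 : G) = M38 from by decide, show tbl M29 = [l1, l0, l0, l1, l0] from by decide, show tbl M38 = [l1, l1, l0, l0, l1, l0] from by decide, ← evP_cons_b]
  · rw [show (B * M30 : G) = M35 from by decide, show tbl M30 = [l0, l1, l1, l1, l0] from by decide, show tbl M35 = [l0, l0, l0, l1, l0, l0] from by decide, ← evP_cons_b]
    exact eq21
  · rw [show (B * M31 : G) = M33 from by decide, show tbl M31 = [l1, l1, l0, l0, l1] from by decide, show tbl M33 = [l0, l1, l1, l0, l0, l0] from by decide, ← evP_cons_b]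
    exact eq22
  · rw [show (B * M32 : G) = M41 from by decide, show tbl M32 = [l0, l0, l1, l0, l0, l0] from by decide, show tbl M41 = [l1, l0, l0, l1, l0, l0, l0] from by decide, ← evP_cons_b]
  · rw [show (B * M33 : G) = M11 from by decide, show tbl M33 = [l0, l1, l1, l0, l0, l0] from by decide, show tbl M11 = [l0, l0, l1] from by decide, ← evP_cons_b]
    exact eq24
  · rw [show (B * M34 : G) = M7 from by decide, show tbl M34 = [l1, l1, l1, l0, l0, l0] from by decide, show tbl M7 = [l0, l0, l0] from by decide, ← evP_cons_b]
    exact eq25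
  · rw [show (B * M35 : G) = M42 from by decide, show tbl M35 = [l0, l0, l0, l1, l0, l0] from by decide, show tbl M42 = [l0, l1, l1, l1, l0, l0, l0] from by decide, ← evP_cons_b]
    exact eq27
  · rw [show (B * M36 : G) = M43 from by decide, show tbl M36 = [l1, l0, l0, l1, l0, l0] from by decide, show tbl M43 = [l1, l1, l0, l0, l1, l0, l0] from by decide, ← evP_cons_b]
  · rw [show (B * M37 : G) = M40 from by decide, show tbl M37 = [l0, l1, l1, l1, l0, l0] from by decide, show tbl M40 = [l0, l0, l0, l1, l0, l0, l0] from by decide, ← evP_cons_b]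
    exact eq29
  · rw [show (B * M38 : G) = M12 from by decide, show tbl M38 = [l1, l1, l0, l0, l1, l0] from by decide, show tbl M12 = [l0, l1, l1] from by decide, ← evP_cons_b]
    exact eq30
  · rw [show (B * M39 : G) = M44 from by decide, show tbl M39 = [l0, l1, l1, l0, l0, l1] from by decide, show tbl M44 = [l0, l1, l1, l0, l0, l1, l0] from by decide, ← evP_cons_b]
    exact eq32
  · rw [show (B * M40 : G) = M22 from by decide, show tbl M40 = [l0, l0, l0, l1, l0, l0, l0] from by decide, show tbl M22 = [l0, l1, l1, l1] from by decide, ← evP_cons_b]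
    exact eq34
  · rw [show (B * M41 : G) = M45 from by decide, show tbl M41 = [l1, l0, l0, l1, l0, l0, l0] from by decide, show tbl M45 = [l1, l1, l0, l0, l1, l0, l0, l0] from by decide, ← evP_cons_b]
  · rw [show (B * M42 : G) = M20 from by decide, show tbl M42 = [l0, l1, l1, l1, l0, l0, l0] from by decide, show tbl M20 = [l0, l0, l0, l1] from by decide, ← evP_cons_b]
    exact eq36
  · rw [show (B * M43 : G) = M18 from by decide, show tbl M43 = [l1, l1, l0, l0, l1, l0, l0] from by decide, show tbl M18 = [l0, l1, l1, l0] from by decide, ← evP_cons_b]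
    exact eq37
  · rw [show (B * M44 : G) = M46 from by decide, show tbl M44 = [l0, l1, l1, l0, l0, l1, l0] from by decide, show tbl M46 = [l0, l1, l1, l0, l0, l1, l0, l0] from by decide, ← evP_cons_b]
    exact eq39
  · rw [show (B * M45 : G) = M26 from by decide, show tbl M45 = [l1, l1, l0, l0, l1, l0, l0, l0] from by decide, show tbl M26 = [l0, l1, l1, l0, l0] from by decide, ← evP_cons_b]
    exact eq40
  · rw [show (B * M46 : G) = M47 from by decide, show tbl M46 = [l0, l1, l1, l0, l0, l1, l0, l0] from by decide, show tbl M47 = [l0, l1, l1, l0, l0, l1, l0, l0, l0] from by decide, ← evP_cons_b]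
    exact eq42
  · rw [show (B * M47 : G) = M39 from by decide, show tbl M47 = [l0, l1, l1, l0, l0, l1, l0, l0, l0] from by decide, show tbl M39 = [l0, l1, l1, l0, l0, l1] from by decide, ← evP_cons_b]
    exact eq44


theorem phi_a : phi a = A := by
  simp [phi, a, PresentedGroup.toGroup.of, fgen]

theorem phi_b : phi b = B := by
  simp [phi, b, PresentedGroup.toGroup.of, fgen]

theorem phi_lP (x : Fin 2 × Bool) : phi (lP x) = lG x := by
  rcases x with ⟨i, bo⟩
  fin_cases i <;> cases bo <;>
    simp [lP, lG, map_inv, phi_a, phi_b, show (![a,b] 0 : P) = a from rfl,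
      show (![a,b] 1 : P) = b from rfl, show (![A,B] 0 : G) = A from rfl,
      show (![A,B] 1 : G) = B from rfl]

theorem phi_evP : ∀ w, phi (evP w) = evG w
  | [] => by simp [evP, evG]
  | x :: t => by
      rw [evP_cons, map_mul, phi_lP, phi_evP t]
      simp [evG]

theorem surj : ∀ g : G, phi (evP (tbl g)) = g := by
  intro g
  rw [phi_evP]
  revert g
  decide

theorem tbl_one : tbl 1 = [] := by decide

theorem main : ∀ x : P, ∀ g : G, x * evP (tbl g) = evP (tbl (phi x * g)) := by
  intro x
  have hx : x ∈ Subgroup.closure (Set.range (PresentedGroup.of : Fin 2 → P)) := by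
    rw [PresentedGroup.closure_range_of]; exact Subgroup.mem_top x
  induction hx using Subgroup.closure_induction with
  | mem x hx =>
      obtain ⟨i, rfl⟩ := hx
      fin_cases i
      · intro g
        show a * evP (tbl g) = evP (tbl (phi a * g))
        rw [phi_a]; exact keyA g
      · intro g
        show b * evP (tbl g) = evP (tbl (phi b * g))
        rw [phi_b]; exact keyB g
  | one => intro g; simp
  | mul x y hx hy ihx ihy =>
      intro g
      rw [map_mul, mul_assoc, ihy g, ihx (phi y * g), mul_assoc]
  | inv x hx ih =>
      intro g
      have h := ih ((phi x)⁻¹ * g)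
      rw [mul_inv_cancel_left] at h
      rw [map_inv, ← h, inv_mul_cancel_left]

theorem leftInv : ∀ x : P, evP (tbl (phi x)) = x := by
  intro x
  have h := main x 1
  rw [tbl_one, mul_one] at h
  have : evP ([] : List (Fin 2 × Bool)) = 1 := rfl
  rw [this, mul_one] at h
  exact h.symm

theorem iso : Nonempty (P ≃* G) := by
  have hbij : Function.Bijective phi :=
    ⟨fun x y h => by rw [← leftInv x, h, leftInv y],
     fun g => ⟨evP (tbl g), surj g⟩⟩
  exact ⟨MulEquiv.ofBijective phi hbij⟩

end SL24

theorem stmt_8 :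
    Nonempty (PresentedGroup sl24Rels ≃* Matrix.SpecialLinearGroup (Fin 2) (ZMod 4)) :=
  SL24.iso
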